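/- The integral ∫_0^1 [ln t − ln(1−t)]² · ln(1−t)/t dt equals −7·ζ(4) = −7π⁴/90. -/

import Mathlib

/-!
The substitution `t = u / (1 + u)` turns the integral into `-∫₀^∞ h` with
`h u = log² u · log (1 + u) / (u (1 + u))`. Folding `(1, ∞)` onto `(0, 1)` by `u ↦ 1 / u` gives
`∫₀¹ (log² v · log (1 + v) / v - log³ v / (1 + v)) dv`, and expanding `1 / (1 + v)` and
`log (1 + v) / v` in powers of `-v` writes this integrand as `∑ (-1)ⁿ vⁿ log² v (1/(n+1) - log v)`.
The functions `vⁿ log² v (1/(n+1) - log v)` are nonnegative on `(0, 1)` and, by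
`∫₀¹ vⁿ logᵐ v dv = (-1)ᵐ m! / (n+1)ᵐ⁺¹`, have integral `8 / (n+1)⁴`; so the series may be
integrated termwise, and the result is `8 ∑ (-1)ⁿ / (n+1)⁴ = 8 · (7/8) ζ(4)`.
-/

open Real MeasureTheory Set
open scoped Nat

section Substitution

variable {E : Type*} [NormedAddCommGroup E] [NormedSpace ℝ E]

lemma image_exp_neg_Ioi : (fun s : ℝ => exp (-s)) '' Ioi 0 = Ioo 0 1 := by
  ext x
  constructor
  · rintro ⟨s, hs, rfl⟩
    exact ⟨exp_pos _, exp_lt_one_iff.mpr (neg_lt_zero.mpr hs)⟩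
  · rintro ⟨hx0, hx1⟩
    exact ⟨-log x, neg_pos.mpr (log_neg hx0 hx1), by simp [exp_log hx0]⟩

lemma injOn_exp_neg : InjOn (fun s : ℝ => exp (-s)) (Ioi 0) :=
  (exp_injective.comp neg_injective).injOn

lemma hasDerivAt_exp_neg (s : ℝ) : HasDerivAt (fun s : ℝ => exp (-s)) (-exp (-s)) s := by
  simpa using (hasDerivAt_neg s).exp

lemma integrableOn_Ioo_zero_one_iff_comp_exp_neg (g : ℝ → E) :
    IntegrableOn g (Ioo 0 1) ↔ IntegrableOn (fun s => exp (-s) • g (exp (-s))) (Ioi 0) := by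
  rw [← image_exp_neg_Ioi, integrableOn_image_iff_integrableOn_abs_deriv_smul measurableSet_Ioi
    (fun s _ => (hasDerivAt_exp_neg s).hasDerivWithinAt) injOn_exp_neg]
  simp only [abs_neg, abs_of_pos (exp_pos _)]

lemma integral_Ioo_zero_one_eq_comp_exp_neg (g : ℝ → E) :
    ∫ x in Ioo 0 1, g x = ∫ s in Ioi 0, exp (-s) • g (exp (-s)) := by
  rw [← image_exp_neg_Ioi, integral_image_eq_integral_abs_deriv_smul measurableSet_Ioi
    (fun s _ => (hasDerivAt_exp_neg s).hasDerivWithinAt) injOn_exp_neg]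
  simp only [abs_neg, abs_of_pos (exp_pos _)]

lemma image_inv_Ioo_zero_one : (fun v : ℝ => v⁻¹) '' Ioo 0 1 = Ioi 1 := by
  rw [image_inv_eq_inv, inv_Ioo_0_left one_pos, inv_one]

lemma integrableOn_Ioi_one_iff_comp_inv (g : ℝ → E) :
    IntegrableOn g (Ioi 1) ↔ IntegrableOn (fun v => (v ^ 2)⁻¹ • g v⁻¹) (Ioo 0 1) := by
  rw [← image_inv_Ioo_zero_one, integrableOn_image_iff_integrableOn_abs_deriv_smul
    measurableSet_Ioo (fun v hv => (hasDerivAt_inv hv.1.ne').hasDerivWithinAt)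
    inv_injective.injOn]
  simp only [abs_neg, abs_inv, abs_pow, sq_abs]

lemma integral_Ioi_one_eq_comp_inv (g : ℝ → E) :
    ∫ u in Ioi 1, g u = ∫ v in Ioo 0 1, (v ^ 2)⁻¹ • g v⁻¹ := by
  rw [← image_inv_Ioo_zero_one, integral_image_eq_integral_abs_deriv_smul
    measurableSet_Ioo (fun v hv => (hasDerivAt_inv hv.1.ne').hasDerivWithinAt)
    inv_injective.injOn]
  simp only [abs_neg, abs_inv, abs_pow, sq_abs]

lemma integral_Ioi_zero_eq_integral_Ioo_add_comp_inv {g : ℝ → E}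
    (h₀ : IntegrableOn g (Ioo 0 1)) (h₁ : IntegrableOn (fun v => (v ^ 2)⁻¹ • g v⁻¹) (Ioo 0 1)) :
    ∫ u in Ioi 0, g u = ∫ v in Ioo 0 1, (g v + (v ^ 2)⁻¹ • g v⁻¹) := by
  have hIci : IntegrableOn g (Ici 1) :=
    Iff.mpr integrableOn_Ici_iff_integrableOn_Ioi ((integrableOn_Ioi_one_iff_comp_inv g).mpr h₁)
  rw [integral_add h₀ h₁, ← integral_Ioi_one_eq_comp_inv, ← Ioo_union_Ici_eq_Ioi zero_lt_one,
    setIntegral_union ((Iio_disjoint_Ici le_rfl).mono_left Ioo_subset_Iio_self) measurableSet_Ici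
      h₀ hIci, integral_Ici_eq_integral_Ioi]

lemma image_div_one_add_Ioi : (fun u : ℝ => u / (1 + u)) '' Ioi 0 = Ioo 0 1 := by
  ext t
  constructor
  · rintro ⟨u, hu, rfl⟩
    have hu : (0 : ℝ) < u := hu
    exact ⟨by positivity, (div_lt_one (by positivity)).mpr (by linarith)⟩
  · rintro ⟨ht0, ht1⟩
    refine ⟨t / (1 - t), div_pos ht0 (by linarith), ?_⟩
    field_simp
    ring

lemma integral_Ioo_zero_one_eq_comp_div_one_add (g : ℝ → E) :
    ∫ t in Ioo 0 1, g t = ∫ u in Ioi 0, ((1 + u) ^ 2)⁻¹ • g (u / (1 + u)) := by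
  have hderiv (u : ℝ) (hu : u ∈ Ioi (0 : ℝ)) :
      HasDerivWithinAt (fun u : ℝ => u / (1 + u)) ((1 + u) ^ 2)⁻¹ (Ioi 0) u := by
    have hu : 1 + u ≠ 0 := by have : (0 : ℝ) < u := hu; positivity
    have h := (hasDerivAt_id' u).div ((hasDerivAt_id' u).const_add 1) hu
    rw [show (1 * (1 + u) - u * 1) / (1 + u) ^ 2 = ((1 + u) ^ 2)⁻¹ by ring] at h
    exact h.hasDerivWithinAt
  have hinj : InjOn (fun u : ℝ => u / (1 + u)) (Ioi 0) := by
    intro a (ha : 0 < a) b (hb : 0 < b) hab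
    rw [div_eq_div_iff (by positivity) (by positivity)] at hab
    linarith
  rw [← image_div_one_add_Ioi, integral_image_eq_integral_abs_deriv_smul measurableSet_Ioi
    hderiv hinj]
  simp only [abs_inv, abs_pow, sq_abs]

end Substitution

lemma integrableOn_Ioi_pow_mul_exp_neg_mul (m : ℕ) {r : ℝ} (hr : 0 < r) :
    IntegrableOn (fun s : ℝ => s ^ m * exp (-(r * s))) (Ioi 0) := by
  have h := integrableOn_rpow_mul_exp_neg_mul_rpow (s := m) (p := 1)
    (by linarith [(Nat.cast_nonneg m : (0 : ℝ) ≤ m)]) one_pos hr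
  refine h.congr_fun (fun s _ => ?_) measurableSet_Ioi
  simp only [rpow_one, rpow_natCast, neg_mul]

lemma integral_Ioi_pow_mul_exp_neg_mul (m : ℕ) {r : ℝ} (hr : 0 < r) :
    ∫ s in Ioi 0, s ^ m * exp (-(r * s)) = m ! / r ^ (m + 1) := by
  have h := integral_rpow_mul_exp_neg_mul_Ioi (a := m + 1) (by positivity) hr
  rw [add_sub_cancel_right, Gamma_nat_eq_factorial, ← Nat.cast_succ, rpow_natCast,
    div_pow, one_pow, one_div_mul_eq_div] at h
  rw [← h]
  exact setIntegral_congr_fun measurableSet_Ioi fun s _ => by rw [rpow_natCast]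

lemma exp_neg_smul_rpow_mul_log_pow (a s : ℝ) (m : ℕ) :
    exp (-s) • (exp (-s) ^ a * log (exp (-s)) ^ m) =
      (-1) ^ m * (s ^ m * exp (-((a + 1) * s))) := by
  rw [log_exp, ← exp_mul, smul_eq_mul, ← mul_assoc, ← exp_add, neg_pow]
  ring_nf

lemma integrableOn_rpow_mul_log_pow {a : ℝ} (ha : -1 < a) (m : ℕ) :
    IntegrableOn (fun x => x ^ a * log x ^ m) (Ioo 0 1) := by
  rw [integrableOn_Ioo_zero_one_iff_comp_exp_neg]
  simp only [exp_neg_smul_rpow_mul_log_pow]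
  exact (integrableOn_Ioi_pow_mul_exp_neg_mul m (by linarith)).const_mul _

lemma integral_rpow_mul_log_pow {a : ℝ} (ha : -1 < a) (m : ℕ) :
    ∫ x in Ioo 0 1, x ^ a * log x ^ m = (-1) ^ m * m ! / (a + 1) ^ (m + 1) := by
  rw [integral_Ioo_zero_one_eq_comp_exp_neg]
  simp only [exp_neg_smul_rpow_mul_log_pow]
  rw [integral_const_mul, integral_Ioi_pow_mul_exp_neg_mul m (by linarith), mul_div_assoc]

lemma hasSum_neg_one_pow_div_succ_pow {p : ℕ} {S : ℝ}
    (hS : HasSum (fun n : ℕ => 1 / ((n : ℝ) + 1) ^ p) S) :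
    HasSum (fun n : ℕ => (-1) ^ n / ((n : ℝ) + 1) ^ p) ((1 - 2 / 2 ^ p) * S) := by
  set f : ℕ → ℝ := fun n => 1 / ((n : ℝ) + 1) ^ p
  have hodd : HasSum (fun k => f (2 * k + 1)) (S / 2 ^ p) := by
    have h2 : (fun k => f (2 * k + 1)) = fun k => f k / 2 ^ p := by
      funext k
      simp only [f]
      push_cast
      rw [show (2 * (k : ℝ) + 1 + 1) = 2 * (k + 1) by ring, mul_pow]
      field_simp
    rw [h2]
    exact hS.div_const _
  obtain ⟨E, heven⟩ : Summable (fun k => f (2 * k)) :=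
    hS.summable.comp_injective (mul_right_injective₀ two_ne_zero)
  have hE : E + S / 2 ^ p = S := (heven.even_add_odd hodd).unique hS
  have h := HasSum.even_add_odd (f := fun n : ℕ => (-1) ^ n / ((n : ℝ) + 1) ^ p)
    (by simpa [pow_mul, f] using heven) (by simpa [pow_succ, pow_mul, neg_div, f] using hodd.neg)
  convert h using 1
  linear_combination -hE

lemma hasSum_one_div_succ_pow_four :
    HasSum (fun n : ℕ => 1 / ((n : ℝ) + 1) ^ 4) (π ^ 4 / 90) := by
  have h := (hasSum_nat_add_iff (f := fun n : ℕ => 1 / (n : ℝ) ^ 4) 1).mpr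
    (by simpa using hasSum_zeta_four)
  exact_mod_cast h

lemma hasSum_neg_one_pow_div_succ_pow_four :
    HasSum (fun n : ℕ => (-1) ^ n / ((n : ℝ) + 1) ^ 4) (7 * π ^ 4 / 720) := by
  convert hasSum_neg_one_pow_div_succ_pow hasSum_one_div_succ_pow_four using 1
  ring

lemma integrableOn_log_pow (m : ℕ) : IntegrableOn (fun x => log x ^ m) (Ioo 0 1) := by
  simpa using integrableOn_rpow_mul_log_pow (a := 0) (by norm_num) m

noncomputable def halfLineIntegrand (u : ℝ) : ℝ := log u ^ 2 * log (1 + u) / (u * (1 + u))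

lemma measurable_halfLineIntegrand : Measurable halfLineIntegrand := by
  unfold halfLineIntegrand
  fun_prop

lemma integrand_comp_div_one_add {u : ℝ} (hu : 0 < u) :
    ((1 + u) ^ 2)⁻¹ • ((log (u / (1 + u)) - log (1 - u / (1 + u))) ^ 2 *
      log (1 - u / (1 + u)) / (u / (1 + u))) = -halfLineIntegrand u := by
  have h1 : 1 + u ≠ 0 := by positivity
  have hsub : 1 - u / (1 + u) = (1 + u)⁻¹ := by field_simp; ring
  rw [hsub, log_div hu.ne' h1, log_inv, halfLineIntegrand, smul_eq_mul]
  field_simp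
  ring

lemma inv_sq_smul_halfLineIntegrand_inv {v : ℝ} (hv : 0 < v) :
    (v ^ 2)⁻¹ • halfLineIntegrand v⁻¹ = log v ^ 2 * (log (1 + v) - log v) / (1 + v) := by
  have h1 : 1 + v ≠ 0 := by positivity
  have hadd : 1 + v⁻¹ = (1 + v) / v := by field_simp; ring
  rw [halfLineIntegrand, hadd, log_div h1 hv.ne', log_inv, smul_eq_mul]
  field_simp

lemma halfLineIntegrand_nonneg {u : ℝ} (hu : 0 < u) : 0 ≤ halfLineIntegrand u := by
  have := log_nonneg (by linarith : (1 : ℝ) ≤ 1 + u)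
  unfold halfLineIntegrand
  positivity

lemma halfLineIntegrand_le_log_sq {v : ℝ} (hv : v ∈ Ioo 0 1) :
    halfLineIntegrand v ≤ log v ^ 2 := by
  obtain ⟨hv0, -⟩ := hv
  have hlog : log (1 + v) ≤ v * (1 + v) := by
    nlinarith [log_le_sub_one_of_pos (by linarith : (0 : ℝ) < 1 + v)]
  rw [halfLineIntegrand, mul_div_assoc]
  exact mul_le_of_le_one_right (sq_nonneg _) ((div_le_one (by positivity)).mpr hlog)

lemma integrableOn_halfLineIntegrand : IntegrableOn halfLineIntegrand (Ioo 0 1) := by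
  refine Integrable.mono' (integrableOn_log_pow 2)
    measurable_halfLineIntegrand.aestronglyMeasurable ?_
  filter_upwards [ae_restrict_mem measurableSet_Ioo] with v hv
  rw [norm_of_nonneg (halfLineIntegrand_nonneg hv.1)]
  exact halfLineIntegrand_le_log_sq hv

lemma integrableOn_inv_sq_smul_halfLineIntegrand_inv :
    IntegrableOn (fun v => (v ^ 2)⁻¹ • halfLineIntegrand v⁻¹) (Ioo 0 1) := by
  refine Integrable.mono' ((integrableOn_log_pow 2).sub (integrableOn_log_pow 3))
    (by unfold halfLineIntegrand; fun_prop) ?_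
  filter_upwards [ae_restrict_mem measurableSet_Ioo] with v ⟨hv0, hv1⟩
  have hlog : log (1 + v) ≤ 1 := by
    linarith [log_le_sub_one_of_pos (by linarith : (0 : ℝ) < 1 + v)]
  have hlogv : log v ≤ 0 := log_nonpos hv0.le hv1.le
  have hlog1 : 0 ≤ log (1 + v) := log_nonneg (by linarith)
  have hnum : 0 ≤ log v ^ 2 * (log (1 + v) - log v) :=
    mul_nonneg (sq_nonneg _) (by linarith)
  rw [inv_sq_smul_halfLineIntegrand_inv hv0, norm_of_nonneg (by positivity)]
  calc log v ^ 2 * (log (1 + v) - log v) / (1 + v)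
      ≤ log v ^ 2 * (log (1 + v) - log v) := div_le_self hnum (by linarith)
    _ ≤ log v ^ 2 * (1 - log v) := by gcongr
    _ = log v ^ 2 - log v ^ 3 := by ring

noncomputable def foldedTerm (n : ℕ) (v : ℝ) : ℝ := v ^ n * log v ^ 2 * (1 / (n + 1) - log v)

lemma foldedTerm_nonneg (n : ℕ) {v : ℝ} (hv : v ∈ Ioo 0 1) : 0 ≤ foldedTerm n v := by
  have hlog : log v ≤ 0 := log_nonpos hv.1.le hv.2.le
  have hn : 0 < 1 / ((n : ℝ) + 1) := by positivity
  exact mul_nonneg (mul_nonneg (pow_nonneg hv.1.le n) (sq_nonneg _)) (by linarith)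

lemma foldedTerm_eq (n : ℕ) :
    foldedTerm n =
      fun v => 1 / ((n : ℝ) + 1) * (v ^ (n : ℝ) * log v ^ 2) - v ^ (n : ℝ) * log v ^ 3 := by
  funext v
  rw [foldedTerm, rpow_natCast]
  ring

lemma integrableOn_foldedTerm (n : ℕ) : IntegrableOn (foldedTerm n) (Ioo 0 1) := by
  have hn : (-1 : ℝ) < n := by linarith [(Nat.cast_nonneg n : (0 : ℝ) ≤ n)]
  rw [foldedTerm_eq]
  exact ((integrableOn_rpow_mul_log_pow hn 2).const_mul _).sub
    (integrableOn_rpow_mul_log_pow hn 3)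

lemma integral_foldedTerm (n : ℕ) : ∫ v in Ioo 0 1, foldedTerm n v = 8 / ((n : ℝ) + 1) ^ 4 := by
  have hn : (-1 : ℝ) < n := by linarith [(Nat.cast_nonneg n : (0 : ℝ) ≤ n)]
  rw [foldedTerm_eq, integral_sub ((integrableOn_rpow_mul_log_pow hn 2).const_mul _)
    (integrableOn_rpow_mul_log_pow hn 3), integral_const_mul, integral_rpow_mul_log_pow hn,
    integral_rpow_mul_log_pow hn]
  simp only [Nat.factorial]
  push_cast
  field_simp
  ring

lemma hasSum_foldedTerm {v : ℝ} (hv : v ∈ Ioo 0 1) :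
    HasSum (fun n => (-1) ^ n * foldedTerm n v)
      (halfLineIntegrand v + (v ^ 2)⁻¹ • halfLineIntegrand v⁻¹) := by
  obtain ⟨hv0, hv1⟩ := hv
  have habs : |-v| < 1 := by rwa [abs_neg, abs_of_pos hv0]
  have hgeom : HasSum (fun n : ℕ => (-v) ^ n) (1 + v)⁻¹ := by
    simpa using hasSum_geometric_of_abs_lt_one habs
  have hlog : HasSum (fun n : ℕ => (-v) ^ n / (n + 1)) (log (1 + v) / v) := by
    have h := (hasSum_pow_div_log_of_abs_lt_one habs).div_const (-v)
    rw [sub_neg_eq_add, neg_div_neg_eq] at h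
    exact h.congr_fun fun n => by field_simp; ring
  have h := (hlog.mul_left (log v ^ 2)).sub (hgeom.mul_left (log v ^ 3))
  rw [show log v ^ 2 * (log (1 + v) / v) - log v ^ 3 * (1 + v)⁻¹ =
      halfLineIntegrand v + (v ^ 2)⁻¹ • halfLineIntegrand v⁻¹ by
    rw [inv_sq_smul_halfLineIntegrand_inv hv0, halfLineIntegrand]
    field_simp
    ring] at h
  exact h.congr_fun fun n => by rw [foldedTerm, neg_pow]; ring

lemma hasSum_integral_foldedTerm :
    HasSum (fun n => ∫ v in Ioo 0 1, (-1) ^ n * foldedTerm n v)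
      (∫ v in Ioo 0 1, (halfLineIntegrand v + (v ^ 2)⁻¹ • halfLineIntegrand v⁻¹)) := by
  rw [← setIntegral_congr_fun measurableSet_Ioo fun v hv => (hasSum_foldedTerm hv).tsum_eq]
  refine hasSum_integral_of_summable_integral_norm
    (fun n => (integrableOn_foldedTerm n).const_mul _) ?_
  have hnorm (n : ℕ) :
      ∫ v in Ioo 0 1, ‖(-1) ^ n * foldedTerm n v‖ = 8 / ((n : ℝ) + 1) ^ 4 := by
    rw [← integral_foldedTerm n]
    refine setIntegral_congr_fun measurableSet_Ioo fun v hv => ?_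
    rw [norm_mul, norm_pow, norm_neg, norm_one, one_pow, one_mul,
      norm_of_nonneg (foldedTerm_nonneg n hv)]
  simpa only [hnorm, mul_one_div] using hasSum_one_div_succ_pow_four.summable.mul_left 8

lemma integral_Ioi_halfLineIntegrand : ∫ u in Ioi 0, halfLineIntegrand u = 7 * π ^ 4 / 90 := by
  rw [integral_Ioi_zero_eq_integral_Ioo_add_comp_inv integrableOn_halfLineIntegrand
    integrableOn_inv_sq_smul_halfLineIntegrand_inv]
  refine hasSum_integral_foldedTerm.unique ?_
  have h := hasSum_neg_one_pow_div_succ_pow_four.mul_left 8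
  rw [show 8 * (7 * π ^ 4 / 720) = 7 * π ^ 4 / 90 by ring] at h
  exact h.congr_fun fun n => by rw [integral_const_mul, integral_foldedTerm]; ring

theorem zeta4_integral_Ioo :
    ∫ t in Set.Ioo (0 : ℝ) 1,
      (Real.log t - Real.log (1 - t)) ^ 2 * Real.log (1 - t) / t =
      -(7 * Real.pi ^ 4 / 90) := by
  rw [integral_Ioo_zero_one_eq_comp_div_one_add,
    setIntegral_congr_fun measurableSet_Ioi fun u hu => integrand_comp_div_one_add hu,
    integral_neg, integral_Ioi_halfLineIntegrand]
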